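/- Let Γ be a tetravalent G-half-arc-transitive graph for some G ≤ Aut(Γ), let r = rad_G(Γ), a = att_G(Γ) and q = jum_G(Γ). If a does not divide r and a ≠ |V(Γ)|, then q² ≡ ±1 (mod a), and consequently Q_G(Γ) = {q}, i.e. q_t = q_h = q. -/

import Mathlib

/-! Common definitions for tetravalent half-arc-transitive graph theory. -/

open SimpleGraph Set

namespace HalfArc

variable {V W : Type*}

/-- A subgroup of automorphisms acts transitively on the vertices. -/
def IsVertexTrans (Γ : SimpleGraph V) (G : Subgroup (Γ ≃g Γ)) : Prop :=
  ∀ u v : V, ∃ g ∈ G, g u = v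

/-- A subgroup of automorphisms acts transitively on the edges. -/
def IsEdgeTrans (Γ : SimpleGraph V) (G : Subgroup (Γ ≃g Γ)) : Prop :=
  ∀ ⦃u v u' v' : V⦄, Γ.Adj u v → Γ.Adj u' v' →
    ∃ g ∈ G, (g u = u' ∧ g v = v') ∨ (g u = v' ∧ g v = u')

/-- A subgroup of automorphisms acts transitively on the arcs (ordered pairs of
adjacent vertices). -/
def IsArcTrans (Γ : SimpleGraph V) (G : Subgroup (Γ ≃g Γ)) : Prop :=
  ∀ ⦃u v u' v' : V⦄, Γ.Adj u v → Γ.Adj u' v' → ∃ g ∈ G, g u = u' ∧ g v = v'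

/-- Half-arc-transitive: vertex- and edge- but not arc-transitive. -/
def IsHalfArcTrans (Γ : SimpleGraph V) (G : Subgroup (Γ ≃g Γ)) : Prop :=
  IsVertexTrans Γ G ∧ IsEdgeTrans Γ G ∧ ¬ IsArcTrans Γ G

/-- An alternating cycle of length `n` in a graph `Γ` whose edges carry an
orientation `O`: a cyclic sequence of pairwise distinct vertices in which
consecutive vertices are adjacent and any two consecutive edges have opposite
orientations. -/
structure AltCycle (Γ : SimpleGraph V) (O : V → V → Prop) (n : ℕ) where
  f : ZMod n → V
  inj : Function.Injective f
  adj : ∀ i, Γ.Adj (f i) (f (i + 1))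
  alt : ∀ i, O (f i) (f (i + 1)) ↔ O (f (i + 2)) (f (i + 1))

/-- The vertex set of an alternating cycle. -/
def cycVerts {Γ : SimpleGraph V} {O : V → V → Prop} {n : ℕ} (c : AltCycle Γ O n) : Set V :=
  Set.range c.f

/-- The edge set of an alternating cycle. -/
def cycEdges {Γ : SimpleGraph V} {O : V → V → Prop} {n : ℕ} (c : AltCycle Γ O n) :
    Set (Sym2 V) :=
  Set.range fun i => s(c.f i, c.f (i + 1))

/-- The sets of edges of alternating cycles (an alternating cycle, as a subgraph,
is determined by its edge set). -/
def IsAltEdgeSet (Γ : SimpleGraph V) (O : V → V → Prop) (n : ℕ) (E : Set (Sym2 V)) : Prop :=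
  ∃ c : AltCycle Γ O n, cycEdges c = E

/-- The vertex sets of alternating cycles. -/
def IsAltVertSet (Γ : SimpleGraph V) (O : V → V → Prop) (n : ℕ) (A : Set V) : Prop :=
  ∃ c : AltCycle Γ O n, cycVerts c = A

/-- The set of vertices covered by a set of edges. -/
def suppOf (E : Set (Sym2 V)) : Set V := {v | ∃ e ∈ E, v ∈ e}

/-- The graph of alternating cycles: its vertices are the alternating cycles
(represented by their edge sets), two of them adjacent whenever they share a vertex. -/
def altGraph (Γ : SimpleGraph V) (O : V → V → Prop) (n : ℕ) :
    SimpleGraph {E : Set (Sym2 V) // IsAltEdgeSet Γ O n E} where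
  Adj X Y := X ≠ Y ∧ (suppOf X.1 ∩ suppOf Y.1).Nonempty
  symm := by
    constructor
    rintro X Y ⟨hne, x, hx1, hx2⟩
    exact ⟨hne.symm, x, hx2, hx1⟩
  loopless := by constructor; rintro X ⟨hne, -⟩; exact hne rfl

/-- The attachment sets: nonempty intersections of (the vertex sets of) two distinct
alternating cycles. -/
def IsAttSet (Γ : SimpleGraph V) (O : V → V → Prop) (n : ℕ) (A : Set V) : Prop :=
  ∃ c c' : AltCycle Γ O n, cycEdges c ≠ cycEdges c' ∧ (cycVerts c ∩ cycVerts c').Nonempty ∧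
    A = cycVerts c ∩ cycVerts c'

/-- `attachmentIs Γ O n a` : any two distinct alternating cycles with nonempty
intersection meet in exactly `a` vertices. -/
def attachmentIs (Γ : SimpleGraph V) (O : V → V → Prop) (n a : ℕ) : Prop :=
  ∀ A : Set V, IsAttSet Γ O n A → A.ncard = a

/-- A `k`-step rotation of an alternating cycle (in one of the two directions). -/
def IsRot {Γ : SimpleGraph V} {O : V → V → Prop} {n : ℕ} (c : AltCycle Γ O n)
    (g : V → V) (k : ℕ) : Prop :=
  (∀ i, g (c.f i) = c.f (i + k)) ∨ (∀ i, g (c.f i) = c.f (i - k))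

/-- The setup of the paper: a finite connected tetravalent graph `Γ`, a subgroup `G`
of its automorphism group acting half-arc-transitively, one of the two `G`-induced
orientations `O` of the edges of `Γ` (an orbit of `G` on arcs), the `G`-radius `r`
(half the common length of all `G`-alternating cycles) and the `G`-attachment
number `att`, together with the basic structural facts relating them. -/
structure Setup (V : Type*) where
  Γ : SimpleGraph V
  finite : Finite V
  conn : Γ.Connected
  tetra : ∀ v : V, (Γ.neighborSet v).ncard = 4
  G : Subgroup (Γ ≃g Γ)
  hat : IsHalfArcTrans Γ G
  O : V → V → Prop
  O_adj : ∀ ⦃u v⦄, O u v → Γ.Adj u v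
  O_choice : ∀ ⦃u v⦄, Γ.Adj u v → (O u v ↔ ¬ O v u)
  O_inv : ∀ g ∈ G, ∀ ⦃u v⦄, O u v → O (g u) (g v)
  O_orbit : ∀ ⦃u v u' v'⦄, O u v → O u' v' → ∃ g ∈ G, g u = u' ∧ g v = v'
  r : ℕ
  r_pos : 0 < r
  /-- every vertex lies on exactly two `G`-alternating cycles, each of length `2 * r` -/
  alt_cover : ∀ v : V, {E : Set (Sym2 V) | IsAltEdgeSet Γ O (2 * r) E ∧ v ∈ suppOf E}.ncard = 2
  att : ℕ
  att_pos : 0 < att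
  /-- any two non-disjoint `G`-alternating cycles meet in exactly `att` vertices -/
  att_eq : attachmentIs Γ O (2 * r) att
  att_dvd : att ∣ 2 * r

namespace Setup

variable {V : Type*} (S : Setup V)

/-- The kernel of the action of `G` on the set of `G`-alternating cycles:
the elements of `G` fixing every `G`-alternating cycle setwise. -/
def altKernel : Subgroup (S.Γ ≃g S.Γ) where
  carrier := {g | g ∈ S.G ∧ ∀ E : Set (Sym2 V),
    IsAltEdgeSet S.Γ S.O (2 * S.r) E → Sym2.map (g : V → V) '' E = E}
  one_mem' := by
    refine ⟨S.G.one_mem, fun E _ => ?_⟩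
    have : Sym2.map ((1 : S.Γ ≃g S.Γ) : V → V) = id := by
      funext e
      have : ((1 : S.Γ ≃g S.Γ) : V → V) = id := rfl
      rw [this, Sym2.map_id, id]
    rw [this, Set.image_id]
  mul_mem' := by
    rintro g h ⟨hg, hg'⟩ ⟨hh, hh'⟩
    refine ⟨S.G.mul_mem hg hh, fun E hE => ?_⟩
    have hcomp : Sym2.map ((g * h : S.Γ ≃g S.Γ) : V → V)
        = Sym2.map (g : V → V) ∘ Sym2.map (h : V → V) := by
      funext e
      have : ((g * h : S.Γ ≃g S.Γ) : V → V) = (g : V → V) ∘ (h : V → V) := rfl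
      rw [this, Function.comp_apply, ← Sym2.map_map]
    rw [hcomp, Set.image_comp, hh' E hE, hg' E hE]
  inv_mem' := by
    rintro g ⟨hg, hg'⟩
    refine ⟨S.G.inv_mem hg, fun E hE => ?_⟩
    conv_lhs => rw [← hg' E hE]
    rw [← Set.image_comp]
    have : Sym2.map ((g⁻¹ : S.Γ ≃g S.Γ) : V → V) ∘ Sym2.map (g : V → V) = id := by
      funext e
      rw [Function.comp_apply, Sym2.map_map]
      have h1 : ((g⁻¹ : S.Γ ≃g S.Γ) : V → V) ∘ (g : V → V) = id := by
        funext v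
        exact g.toEquiv.symm_apply_apply v
      rw [h1, Sym2.map_id]
    rw [this, Set.image_id]

/-- The kernel of the action of `G` on a collection of sets of vertices. -/
def kernelOn (P : Set V → Prop) : Subgroup (S.Γ ≃g S.Γ) where
  carrier := {g | g ∈ S.G ∧ ∀ A : Set V, P A → (g : V → V) '' A = A}
  one_mem' := ⟨S.G.one_mem, fun A _ => by
    have : ((1 : S.Γ ≃g S.Γ) : V → V) = id := rfl
    rw [this, Set.image_id]⟩
  mul_mem' := by
    rintro g h ⟨hg, hg'⟩ ⟨hh, hh'⟩
    refine ⟨S.G.mul_mem hg hh, fun A hA => ?_⟩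
    have : ((g * h : S.Γ ≃g S.Γ) : V → V) = (g : V → V) ∘ (h : V → V) := rfl
    rw [this, Set.image_comp, hh' A hA, hg' A hA]
  inv_mem' := by
    rintro g ⟨hg, hg'⟩
    refine ⟨S.G.inv_mem hg, fun A hA => ?_⟩
    conv_lhs => rw [← hg' A hA]
    rw [← Set.image_comp]
    have : ((g⁻¹ : S.Γ ≃g S.Γ) : V → V) ∘ (g : V → V) = id := by
      funext v; exact g.toEquiv.symm_apply_apply v
    rw [this, Set.image_id]

/-- The kernel of the action of `G` on the set of all `G`-attachment sets. -/
def attKernel : Subgroup (S.Γ ≃g S.Γ) :=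
  S.kernelOn (IsAttSet S.Γ S.O (2 * S.r))

/-- The block `B_s(C; u_i) = {u_{i+2sj} : 0 ≤ j < att}` of Construction 5.3. -/
def blockSet (s : ℕ) (c : AltCycle S.Γ S.O (2 * S.r)) (i : ZMod (2 * S.r)) : Set V :=
  {v | ∃ j : ℕ, j < S.att ∧ v = c.f (i + (2 * s * j : ℕ))}

/-- The imprimitivity block system `B` of Construction 5.3. -/
def Blocks (s : ℕ) : Set (Set V) :=
  {A | ∃ (c : AltCycle S.Γ S.O (2 * S.r)) (i : ZMod (2 * S.r)), A = S.blockSet s c i}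

/-- The quotient graph `Γ_B` of `Γ` with respect to the block system `B`. -/
def quotGraph (s : ℕ) : SimpleGraph {A : Set V // A ∈ S.Blocks s} where
  Adj X Y := X ≠ Y ∧ ∃ u ∈ X.1, ∃ v ∈ Y.1, S.Γ.Adj u v
  symm := by
    constructor
    rintro X Y ⟨hne, u, hu, v, hv, ha⟩
    exact ⟨hne.symm, v, hv, u, hu, ha.symm⟩
  loopless := by constructor; rintro X ⟨hne, -⟩; exact hne rfl

/-- The kernel of the action of `G` on the quotient graph `Γ_B`. -/
def quotKernel (s : ℕ) : Subgroup (S.Γ ≃g S.Γ) :=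
  S.kernelOn (· ∈ S.Blocks s)

/-- The orientation of the edges of the quotient graph `Γ_B` induced by `O`. -/
def quotO (s : ℕ) (X Y : {A : Set V // A ∈ S.Blocks s}) : Prop :=
  ∃ u ∈ X.1, ∃ v ∈ Y.1, S.O u v

end Setup

/-- The data defining the parameters `q_t` and `q_h` of Section 3: a vertex `v`,
the two `G`-alternating cycles `c` and `c'` through `v` (with `v = u_0 = v_0` and
`v` the tail of the two arcs of `c` incident to it), and the minimality properties
defining `q_t` and `q_h`.  Here `ell = 2r/att`. -/
structure JumpData {V : Type*} (S : Setup V) where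
  v : V
  c : AltCycle S.Γ S.O (2 * S.r)
  c' : AltCycle S.Γ S.O (2 * S.r)
  ell : ℕ
  hell : S.att * ell = 2 * S.r
  hc : c.f 0 = v
  hc' : c'.f 0 = v
  hne : cycEdges c ≠ cycEdges c'
  htail₁ : S.O v (c.f 1)
  htail₂ : S.O v (c.f (-1))
  qt : ℕ
  qh : ℕ
  hqt : c'.f ((qt * ell : ℕ)) = c.f ((ell : ℕ)) ∨
    c'.f ((qt * ell : ℕ)) = c.f (-(ell : ZMod (2 * S.r)))
  hqt_min : ∀ m : ℕ, m < qt → ¬(c'.f ((m * ell : ℕ)) = c.f ((ell : ℕ)) ∨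
    c'.f ((m * ell : ℕ)) = c.f (-(ell : ZMod (2 * S.r))))
  hqh : c.f ((qh * ell : ℕ)) = c'.f ((ell : ℕ)) ∨
    c.f ((qh * ell : ℕ)) = c'.f (-(ell : ZMod (2 * S.r)))
  hqh_min : ∀ m : ℕ, m < qh → ¬(c.f ((m * ell : ℕ)) = c'.f ((ell : ℕ)) ∨
    c.f ((m * ell : ℕ)) = c'.f (-(ell : ZMod (2 * S.r))))

/-- The `G`-alternating jump `jum_G(Γ) = min {q_t, q_h}`. -/
def JumpData.jump {V : Type*} {S : Setup V} (J : JumpData S) : ℕ := min J.qt J.qh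

end HalfArc

/-!
Every vertex has two out- and two in-neighbours, so an alternating cycle is determined by two
consecutive vertices, and an element of `G` carrying an arc of one alternating cycle to an arc of
another maps the first cycle onto the second by a rotation or a reflection.

Number the vertices of `C ∩ C'` by `ZMod a`, the `x`-th being `u_{xℓ}` on `C` and `v_{xℓ}` on
`C'`, and let `R x y` say `v_{xℓ} = u_{yℓ}`: the graph of a partial bijection, with `R 0 0`.
The element of `G` fixing `v` and reversing `C'` makes `R` invariant under `(x, y) ↦ (-x, -y)`.
Tails of arcs sit at the even positions of `C` and at the odd positions of `C'`, and `ℓ = 2r/a`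
is odd as `a ∤ r`; so `q_t` is odd, `v_{q_t ℓ}` is a tail on `C'`, and the element of `G`
carrying `(v, u₁)` to `(v_{q_t ℓ}, v_{q_t ℓ + 1})` makes `R` invariant under
`(x, y) ↦ (q_t + y, δ + ε x)` with `δ, ε = ±1`. These maps generate translations carrying
`(0, 0)` to `(0, q_t² - ε)`, so `q_t² = ε`. Applying them to `(δ', q_h)` and `(-δ', -q_h)`,
where `R δ' q_h` with `δ' = ±1`, gives `q_t ≡ ±q_h (mod a)`; as minimality forces
`q_t, q_h ≤ a/2`, this means `q_t = q_h`.
-/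

theorem Set.eq_of_mem_of_ncard_eq_two {α : Type*} {s : Set α} (hs : s.ncard = 2) {x y z : α}
    (hx : x ∈ s) (hy : y ∈ s) (hz : z ∈ s) (hxz : x ≠ z) (hyz : y ≠ z) : x = y := by
  obtain ⟨a, b, -, rfl⟩ := Set.ncard_eq_two.1 hs
  simp only [Set.mem_insert_iff, Set.mem_singleton_iff] at hx hy hz
  rcases hx with rfl | rfl <;> rcases hy with rfl | rfl <;> rcases hz with rfl | rfl <;> tauto

namespace HalfArc

section Relation

variable {a : ℕ} {R : ZMod a → ZMod a → Prop}

theorem rel_add_mul_of_rel_add [NeZero a] {u v : ZMod a}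
    (hT : ∀ {x y}, R x y → R (x + u) (y + v)) (k : ZMod a) {x y : ZMod a} (h : R x y) :
    R (x + k * u) (y + k * v) := by
  obtain ⟨n, rfl⟩ := ZMod.natCast_zmod_surjective k
  induction n with
  | zero => simpa using h
  | succ n ih => convert hT ih using 1 <;> push_cast <;> ring

/-- For `σ = 1`, injectivity at `(±d, y₀)` forces `2 = 0`, so that `y = -y`. -/
theorem rel_neg_neg_of_rel_neg_smul (hinj : ∀ {x x' y}, R x y → R x' y → x = x')
    {d y₀ : ZMod a} (hd : IsUnit d) (h₀ : R d y₀) {σ : ℤˣ}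
    (hσ : ∀ {x y}, R x y → R (-x) (σ • y)) {x y : ZMod a} (h : R x y) : R (-x) (-y) := by
  rcases Int.units_eq_one_or σ with rfl | rfl
  · have h2 : (2 : ZMod a) = 0 :=
      hd.mul_left_eq_zero.1 (by linear_combination hinj h₀ (by simpa using hσ h₀))
    rw [show -y = y by linear_combination -y * h2]
    simpa using hσ h
  · simpa using hσ h

/-- Here `(x, y) ↦ (q + y, δ + x)` composed with itself and with its conjugate by negation gives
the translations by `(q + δ, q + δ)` and `(q - δ, δ - q)`; with `q + δ = 2u` these carry `(0, 0)`
to `(0, q² - 1)`. -/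
theorem mul_self_eq_one_of_rel [NeZero a] (hfun : ∀ {x y y'}, R x y → R x y' → y = y')
    (h₀ : R 0 0) (hneg : ∀ {x y}, R x y → R (-x) (-y)) {q δ u : ZMod a}
    (hjump : ∀ {x y}, R x y → R (q + y) (δ + x)) (hδ : δ * δ = 1) (hq : q = 2 * u - δ) :
    q * q = 1 := by
  have hT₁ : ∀ {x y}, R x y → R (x + (q + δ)) (y + (q + δ)) := fun h => by
    convert hjump (hjump h) using 1 <;> ring
  have hT₂ : ∀ {x y}, R x y → R (x + (q - δ)) (y + (δ - q)) := fun h => by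
    convert hjump (hneg (hjump (hneg h))) using 1 <;> ring
  have h := rel_add_mul_of_rel_add hT₂ (-u) (rel_add_mul_of_rel_add hT₁ (u - δ) h₀)
  have : R 0 (q * q - 1) := by
    convert h using 1
    · rw [hq]; ring
    · rw [hq]; linear_combination hδ
  linear_combination -(hfun h₀ this)

/-- As above, now with the translations by `(q - δ, q + δ)` and `(q + δ, δ - q)`, which carry
`(0, 0)` to `(0, q² + 1)`. -/
theorem mul_self_eq_neg_one_of_rel [NeZero a] (hfun : ∀ {x y y'}, R x y → R x y' → y = y')
    (h₀ : R 0 0) (hneg : ∀ {x y}, R x y → R (-x) (-y)) {q δ u : ZMod a}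
    (hjump : ∀ {x y}, R x y → R (q + y) (δ - x)) (hδ : δ * δ = 1) (hq : q = 2 * u - δ) :
    q * q = -1 := by
  have hT₁ : ∀ {x y}, R x y → R (x + (q - δ)) (y + (q + δ)) := fun h => by
    convert hjump (hneg (hjump h)) using 1 <;> ring
  have hT₂ : ∀ {x y}, R x y → R (x + (q + δ)) (y + (δ - q)) := fun h => by
    convert hjump (hjump (hneg h)) using 1 <;> ring
  have h := rel_add_mul_of_rel_add hT₂ (δ - u) (rel_add_mul_of_rel_add hT₁ u h₀)
  have : R 0 (q * q + 1) := by
    convert h using 1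
    · rw [hq]; ring
    · rw [hq]; linear_combination -hδ
  linear_combination -(hfun h₀ this)

theorem mul_self_eq_one_or_neg_one_of_rel [NeZero a]
    (hfun : ∀ {x y y'}, R x y → R x y' → y = y') (h₀ : R 0 0)
    (hneg : ∀ {x y}, R x y → R (-x) (-y)) {q : ℕ} {δ : ZMod a} {ε : ℤˣ}
    (hjump : ∀ {x y}, R x y → R (q + y) (δ + ε • x)) (hδ : δ = 1 ∨ δ = -1) (hq : Odd q) :
    (q * q : ZMod a) = 1 ∨ (q * q : ZMod a) = -1 := by
  obtain ⟨u, hu⟩ : ∃ u : ZMod a, (q : ZMod a) = 2 * u - δ := by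
    obtain ⟨k, rfl⟩ := hq
    rcases hδ with rfl | rfl
    exacts [⟨k + 1, by push_cast; ring⟩, ⟨k, by push_cast; ring⟩]
  have hδδ : δ * δ = 1 := by rcases hδ with rfl | rfl <;> ring
  rcases Int.units_eq_one_or ε with rfl | rfl
  · exact Or.inl (mul_self_eq_one_of_rel (R := R) hfun h₀ hneg
      (fun h => by simpa using hjump h) hδδ hu)
  · exact Or.inr (mul_self_eq_neg_one_of_rel (R := R) hfun h₀ hneg
      (fun h => by simpa [sub_eq_add_neg] using hjump h) hδδ hu)

theorem two_mul_le_of_rel_of_forall_le [NeZero a] (hneg : ∀ {x y}, R x y → R (-x) (-y))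
    {q : ℕ} {δ : ZMod a} (hδ : δ = 1 ∨ δ = -1) (hq : R q δ)
    (hmin : ∀ m : ℕ, R m 1 ∨ R m (-1) → q ≤ m) : 2 * q ≤ a := by
  have hle : ∀ {m : ℕ} {s : ZMod a}, (s = 1 ∨ s = -1) → R m s → q ≤ m := fun hs h =>
    hmin _ (by rcases hs with rfl | rfl; exacts [Or.inl h, Or.inr h])
  have hlt : q < a :=
    (hle hδ (by rwa [ZMod.natCast_mod])).trans_lt (Nat.mod_lt _ (NeZero.pos a))
  have : q ≤ a - q := hle (s := -δ) (by rcases hδ with rfl | rfl <;> simp)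
    (by rw [Nat.cast_sub hlt.le, ZMod.natCast_self, zero_sub]; exact hneg hq)
  omega

theorem eq_of_rel_of_forall_le [NeZero a] (hinj : ∀ {x x' y}, R x y → R x' y → x = x') (h₀ : R 0 0)
    (hneg : ∀ {x y}, R x y → R (-x) (-y)) {qt qh : ℕ} {δ δ' : ZMod a} {ε : ℤˣ}
    (hjump : ∀ {x y}, R x y → R (qt + y) (δ + ε • x)) (hδ : δ = 1 ∨ δ = -1)
    (hδ' : δ' = 1 ∨ δ' = -1) (hqh : R δ' qh) (hqt_min : ∀ m : ℕ, R m 1 ∨ R m (-1) → qt ≤ m)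
    (hqh_min : ∀ n : ℕ, R 1 n ∨ R (-1) n → qh ≤ n) : qt = qh := by
  have ha := NeZero.pos a
  have hqt_le :=
    two_mul_le_of_rel_of_forall_le (R := R) hneg hδ (by simpa using hjump h₀) hqt_min
  have hqh_le := two_mul_le_of_rel_of_forall_le (R := fun x y => R y x) hneg hδ' hqh hqh_min
  have hsign : δ + ε • δ' = 0 ∨ δ + ε • -δ' = 0 := by
    rcases hδ with rfl | rfl <;> rcases hδ' with rfl | rfl <;>
      rcases Int.units_eq_one_or ε with rfl | rfl <;> simp
  rcases hsign with h | h
  · have hdvd : a ∣ qt + qh := (ZMod.natCast_eq_zero_iff _ _).1 (by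
      push_cast
      exact hinj (h ▸ hjump hqh) h₀)
    rcases (show qt + qh ≤ a by omega).lt_or_eq with hlt | heq
    · have := Nat.eq_zero_of_dvd_of_lt hdvd hlt
      omega
    · omega
  · have hmod : (qt : ZMod a) = qh := by
      linear_combination hinj (h ▸ hjump (hneg hqh)) h₀
    rw [ZMod.natCast_eq_natCast_iff', Nat.mod_eq_of_lt (by omega), Nat.mod_eq_of_lt (by omega)]
      at hmod
    exact hmod

end Relation

variable {V : Type*}

namespace AltCycle

variable {Γ : SimpleGraph V} {O : V → V → Prop} {n : ℕ}

def reverse (c : AltCycle Γ O n) : AltCycle Γ O n where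
  f i := c.f (-i)
  inj := c.inj.comp neg_injective
  adj i := by
    have := (c.adj (-(i + 1))).symm
    rwa [show -(i + 1) + 1 = -i by ring] at this
  alt i := by
    have := (c.alt (-(i + 2))).symm
    rwa [show -(i + 2) + 1 = -(i + 1) by ring, show -(i + 2) + 2 = -i by ring] at this

theorem O_pred_iff (c : AltCycle Γ O n) (j : ZMod n) :
    O (c.f (j - 1)) (c.f j) ↔ O (c.f (j + 1)) (c.f j) := by
  have := c.alt (j - 1)
  rwa [sub_add_cancel, show j - 1 + 2 = j + 1 by ring] at this

theorem mk_mem_cycEdges (c : AltCycle Γ O n) (i : ZMod n) (σ : ℤˣ) :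
    s(c.f i, c.f (i + σ • 1)) ∈ cycEdges c := by
  rcases Int.units_eq_one_or σ with rfl | rfl
  · exact ⟨i, by simp⟩
  · exact ⟨i - 1, by simp [Sym2.eq_swap, sub_eq_add_neg]⟩

theorem cycEdges_subset_of_apply_add_eq {c d : AltCycle Γ O n} {k k' : ZMod n} {σ : ℤˣ}
    (h : ∀ j, d.f (k' + j) = c.f (k + σ • j)) : cycEdges d ⊆ cycEdges c := by
  rintro _ ⟨j, rfl⟩
  have h₀ := h (j - k')
  have h₁ := h (j - k' + 1)
  rw [add_sub_cancel] at h₀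
  rw [show k' + (j - k' + 1) = j + 1 by ring, smul_add, ← add_assoc] at h₁
  change s(d.f j, d.f (j + 1)) ∈ _
  rw [h₀, h₁]
  exact mk_mem_cycEdges c _ σ

theorem cycEdges_eq_of_apply_add_eq {c d : AltCycle Γ O n} {k k' : ZMod n} {σ : ℤˣ}
    (h : ∀ j, d.f (k' + j) = c.f (k + σ • j)) : cycEdges d = cycEdges c := by
  refine (cycEdges_subset_of_apply_add_eq h).antisymm
    (cycEdges_subset_of_apply_add_eq (k := k') (k' := k) (σ := σ) fun j => ?_)
  rw [h, smul_smul, Int.units_mul_self, one_smul]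

end AltCycle

theorem isAltEdgeSet_two_singleton {Γ : SimpleGraph V} {O : V → V → Prop} {v w : V}
    (h : Γ.Adj v w) : IsAltEdgeSet Γ O 2 {s(v, w)} := by
  refine ⟨⟨![v, w], ?_, fun i => ?_, fun i => ?_⟩, ?_⟩
  · intro i j hij
    fin_cases i <;> fin_cases j <;> first | rfl | exact absurd hij h.ne | exact absurd hij h.ne'
  · fin_cases i
    exacts [h, h.symm]
  · rw [show i + 2 = i by fin_cases i <;> rfl]
  · ext e
    simp only [cycEdges, Set.mem_range, Set.mem_singleton_iff]
    constructor
    · rintro ⟨i, rfl⟩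
      fin_cases i
      exacts [rfl, Sym2.eq_swap]
    · rintro rfl
      exact ⟨0, rfl⟩

namespace Setup

variable (S : Setup V)

instance neZero_att : NeZero S.att := ⟨S.att_pos.ne'⟩

instance neZero_two_mul_r : NeZero (2 * S.r) := ⟨by have := S.r_pos; omega⟩

theorem O_map_iff {g : S.Γ ≃g S.Γ} (hg : g ∈ S.G) {u w : V} : S.O (g u) (g w) ↔ S.O u w :=
  ⟨fun h => by simpa using S.O_inv g⁻¹ (S.G.inv_mem hg) h, fun h => S.O_inv g hg h⟩

def mapCycle {n : ℕ} {g : S.Γ ≃g S.Γ} (hg : g ∈ S.G) (c : AltCycle S.Γ S.O n) :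
    AltCycle S.Γ S.O n where
  f i := g (c.f i)
  inj := g.injective.comp c.inj
  adj i := g.map_adj_iff.2 (c.adj i)
  alt i := by simpa only [S.O_map_iff hg] using c.alt i

theorem cycEdges_mapCycle {n : ℕ} {g : S.Γ ≃g S.Γ} (hg : g ∈ S.G) (c : AltCycle S.Γ S.O n) :
    cycEdges (S.mapCycle hg c) = Sym2.map g '' cycEdges c := by
  simp only [cycEdges, ← Set.range_comp]
  rfl

theorem cycEdges_mapCycle_ne {n : ℕ} {g : S.Γ ≃g S.Γ} (hg : g ∈ S.G)
    {c c' : AltCycle S.Γ S.O n} (h : cycEdges c ≠ cycEdges c') :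
    cycEdges (S.mapCycle hg c) ≠ cycEdges (S.mapCycle hg c') := by
  rw [cycEdges_mapCycle, cycEdges_mapCycle]
  exact (Set.image_injective.2 (Sym2.map.injective g.injective)).ne h

theorem ncard_O_add_ncard_O (u : V) : {w | S.O u w}.ncard + {w | S.O w u}.ncard = 4 := by
  have hdisj : Disjoint {w | S.O u w} {w | S.O w u} :=
    Set.disjoint_left.2 fun w h h' => (S.O_choice (S.O_adj h)).1 h h'
  have hunion : {w | S.O u w} ∪ {w | S.O w u} = S.Γ.neighborSet u := by
    ext w
    refine ⟨?_, fun h => ?_⟩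
    · rintro (h | h)
      exacts [S.O_adj h, (S.O_adj h).symm]
    · by_cases ho : S.O u w
      exacts [Or.inl ho, Or.inr ((S.O_choice h.symm).2 ho)]
  have := S.finite
  rw [← S.tetra u, ← hunion, Set.ncard_union_eq hdisj]

theorem ncard_O_map {g : S.Γ ≃g S.Γ} (hg : g ∈ S.G) (u : V) :
    {w | S.O (g u) w}.ncard = {w | S.O u w}.ncard := by
  rw [← Set.ncard_preimage_of_injective_subset_range g.injective
    (by simp [g.surjective.range_eq])]
  congr 1
  ext w
  exact S.O_map_iff hg

/-- Out- and in-degrees are constant by vertex-transitivity, and they have the same sum over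
`V` (both count the arcs of `O`), so each is half of the valency. -/
theorem ncard_O_eq_two (z : V) : {w | S.O z w}.ncard = 2 ∧ {w | S.O w z}.ncard = 2 := by
  classical
  have := S.finite
  cases nonempty_fintype V
  have hout : ∀ u, {w | S.O u w}.ncard = {w | S.O z w}.ncard := fun u => by
    obtain ⟨g, hg, rfl⟩ := S.hat.1 z u
    exact S.ncard_O_map hg z
  have hin : ∀ u, {w | S.O w u}.ncard = 4 - {w | S.O z w}.ncard := fun u => by
    have := S.ncard_O_add_ncard_O u
    rw [hout] at this
    omega
  have hsum := Finset.sum_card_bipartiteAbove_eq_sum_card_bipartiteBelow S.O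
    (s := Finset.univ) (t := Finset.univ)
  simp only [Finset.bipartiteAbove, Finset.bipartiteBelow, ← Set.ncard_coe_finset,
    Finset.coe_filter_univ, hout, hin, Finset.sum_const, Finset.coe_univ, Set.ncard_univ,
    smul_eq_mul] at hsum
  have : Nonempty V := ⟨z⟩
  have hcard : 0 < Nat.card V := Nat.card_pos
  have := Nat.eq_of_mul_eq_mul_left hcard hsum
  have := S.ncard_O_add_ncard_O z
  omega

/-- For `r = 1` every edge at a vertex would be an alternating cycle by itself. -/
theorem two_le_r : 2 ≤ S.r := by
  by_contra hr
  have h2 : 2 * S.r = 2 := by have := S.r_pos; omega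
  have := S.finite
  obtain ⟨v⟩ := S.conn.nonempty
  have hle := Set.ncard_le_ncard_of_injOn (fun w => ({s(v, w)} : Set (Sym2 V)))
    (s := S.Γ.neighborSet v) (t := {E | IsAltEdgeSet S.Γ S.O (2 * S.r) E ∧ v ∈ suppOf E})
    (fun w hw => ⟨by rw [h2]; exact isAltEdgeSet_two_singleton hw, s(v, w), rfl,
      Sym2.mem_mk_left _ _⟩)
    (fun w _ w' _ h => Sym2.congr_right.1 (Set.singleton_eq_singleton_iff.1 h))
    (Set.toFinite _)
  rw [S.tetra v, S.alt_cover v] at hle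
  omega

theorem zmod_two_ne_zero : (2 : ZMod (2 * S.r)) ≠ 0 := by
  intro h
  have := Nat.le_of_dvd two_pos
    ((ZMod.natCast_eq_zero_iff 2 (2 * S.r)).1 (by exact_mod_cast h))
  have := S.two_le_r
  omega

/-- An alternating path arriving at `z` from `x` has at most one continuation, since `z` has
two out-neighbours and two in-neighbours. -/
theorem eq_of_O_iff {x y y' z : V} (hx : S.Γ.Adj z x) (hy : S.Γ.Adj z y) (hy' : S.Γ.Adj z y')
    (hyx : y ≠ x) (hy'x : y' ≠ x) (h : S.O x z ↔ S.O y z) (h' : S.O x z ↔ S.O y' z) :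
    y = y' := by
  by_cases hO : S.O x z
  · exact Set.eq_of_mem_of_ncard_eq_two (S.ncard_O_eq_two z).2 (h.1 hO) (h'.1 hO) hO hyx hy'x
  · have hout : ∀ {w}, S.Γ.Adj z w → ¬ S.O w z → w ∈ {w | S.O z w} :=
      fun hw hw' => (S.O_choice hw).2 hw'
    exact Set.eq_of_mem_of_ncard_eq_two (S.ncard_O_eq_two z).1 (hout hy (h.not.1 hO))
      (hout hy' (h'.not.1 hO)) (hout hx hO) hyx hy'x

theorem apply_add_eq_of_apply_add_one_eq (c d : AltCycle S.Γ S.O (2 * S.r))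
    {k k' : ZMod (2 * S.r)} (h₀ : d.f k' = c.f k) (h₁ : d.f (k' + 1) = c.f (k + 1))
    (j : ZMod (2 * S.r)) : d.f (k' + j) = c.f (k + j) := by
  have ne_two : ∀ (e : AltCycle S.Γ S.O (2 * S.r)) i, e.f (i + 2) ≠ e.f i := fun e i h =>
    S.zmod_two_ne_zero (by simpa using e.inj h)
  have step : ∀ i l, d.f i = c.f l → d.f (i + 1) = c.f (l + 1) →
      d.f (i + 2) = c.f (l + 2) := by
    intro i l hi hi₁
    have hd := d.adj (i + 1)
    have hc := c.adj (l + 1)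
    rw [add_assoc, one_add_one_eq_two] at hd hc
    refine S.eq_of_O_iff (c.adj l).symm (hi₁ ▸ hd) hc (hi ▸ ne_two d i) (ne_two c l) ?_
      (c.alt l)
    simpa [hi, hi₁] using d.alt i
  suffices ∀ m : ℕ, d.f (k' + m) = c.f (k + m) ∧ d.f (k' + m + 1) = c.f (k + m + 1) by
    obtain ⟨m, rfl⟩ := ZMod.natCast_zmod_surjective j
    exact (this m).1
  intro m
  induction m with
  | zero => simpa using ⟨h₀, h₁⟩
  | succ m ih =>
    push_cast
    simp only [← add_assoc]
    refine ⟨ih.2, ?_⟩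
    convert step _ _ ih.1 ih.2 using 2 <;> ring

theorem apply_add_eq_smul_of_apply_add_one_eq (c d : AltCycle S.Γ S.O (2 * S.r))
    {k k' : ZMod (2 * S.r)} (σ : ℤˣ) (h₀ : d.f k' = c.f k)
    (h₁ : d.f (k' + 1) = c.f (k + σ • 1)) (j : ZMod (2 * S.r)) :
    d.f (k' + j) = c.f (k + σ • j) := by
  rcases Int.units_eq_one_or σ with rfl | rfl
  · simp only [one_smul] at h₁ ⊢
    exact S.apply_add_eq_of_apply_add_one_eq c d h₀ h₁ j
  · have hneg : ∀ i, k + (-1 : ℤˣ) • i = -(-k + i) := fun i => by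
      rw [Units.neg_smul, one_smul]; ring
    have := S.apply_add_eq_of_apply_add_one_eq c.reverse d (k := -k)
      (by simpa [AltCycle.reverse] using h₀) (h₁.trans (congrArg c.f (hneg 1))) j
    exact this.trans (congrArg c.f (hneg j).symm)

theorem exists_apply_add_eq_of_cycEdges_eq {c d : AltCycle S.Γ S.O (2 * S.r)}
    (hE : cycEdges d = cycEdges c) {k k' : ZMod (2 * S.r)} (h₀ : d.f k' = c.f k) :
    ∃ σ : ℤˣ, ∀ j, d.f (k' + j) = c.f (k + σ • j) := by
  obtain ⟨i, hi⟩ : s(d.f k', d.f (k' + 1)) ∈ cycEdges c := hE ▸ ⟨k', rfl⟩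
  rcases Sym2.eq_iff.1 hi with ⟨hi₀, hi₁⟩ | ⟨hi₀, hi₁⟩
  · obtain rfl : i = k := c.inj (hi₀.trans h₀)
    exact ⟨1, S.apply_add_eq_smul_of_apply_add_one_eq c d 1 h₀ (by simpa using hi₁.symm)⟩
  · obtain rfl : i = k - 1 := eq_sub_of_add_eq (c.inj (hi₁.trans h₀))
    exact ⟨-1, S.apply_add_eq_smul_of_apply_add_one_eq c d (-1) h₀
      (by simpa [sub_eq_add_neg] using hi₀.symm)⟩

theorem cycEdges_eq_or_eq_of_apply_eq {c c' d : AltCycle S.Γ S.O (2 * S.r)}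
    (hne : cycEdges c ≠ cycEdges c') {z : V} {i i' j : ZMod (2 * S.r)} (hc : c.f i = z)
    (hc' : c'.f i' = z) (hd : d.f j = z) : cycEdges d = cycEdges c ∨ cycEdges d = cycEdges c' := by
  have mem : ∀ (e : AltCycle S.Γ S.O (2 * S.r)) i, e.f i = z →
      cycEdges e ∈ {E | IsAltEdgeSet S.Γ S.O (2 * S.r) E ∧ z ∈ suppOf E} :=
    fun e i h => ⟨⟨e, rfl⟩, _, ⟨i, rfl⟩, h ▸ Sym2.mem_mk_left _ _⟩
  by_cases h : cycEdges d = cycEdges c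
  · exact Or.inl h
  · exact Or.inr (Set.eq_of_mem_of_ncard_eq_two (S.alt_cover z) (mem d j hd) (mem c' i' hc')
      (mem c i hc) h hne.symm)

/-- Otherwise the common vertex would have three in-neighbours or three out-neighbours. -/
theorem O_apply_iff_not_O_apply {c c' : AltCycle S.Γ S.O (2 * S.r)}
    (hne : cycEdges c ≠ cycEdges c') {i i' : ZMod (2 * S.r)} (h : c.f i = c'.f i') :
    S.O (c.f i) (c.f (i + 1)) ↔ ¬ S.O (c'.f i') (c'.f (i' + 1)) := by
  have hnext : ∀ σ : ℤˣ, c'.f (i' + 1) ≠ c.f (i + σ • 1) := fun σ h₁ =>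
    hne (AltCycle.cycEdges_eq_of_apply_add_eq
      (S.apply_add_eq_smul_of_apply_add_one_eq c c' σ h.symm h₁)).symm
  have hpm : c.f (i + 1) ≠ c.f (i - 1) := fun h₁ =>
    S.zmod_two_ne_zero (by linear_combination c.inj h₁)
  by_contra hcon
  have hx : S.Γ.Adj (c.f i) (c'.f (i' + 1)) := h ▸ c'.adj i'
  have hy' : S.Γ.Adj (c.f i) (c.f (i - 1)) := by simpa using (c.adj (i - 1)).symm
  have h₁ : S.O (c'.f (i' + 1)) (c.f i) ↔ S.O (c.f (i + 1)) (c.f i) := by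
    rw [S.O_choice hx.symm, S.O_choice (c.adj i).symm, h]
    rw [h] at hcon
    tauto
  refine hpm (S.eq_of_O_iff hx (c.adj i) hy' ?_ ?_ h₁ (h₁.trans (c.O_pred_iff i).symm))
  · simpa using (hnext 1).symm
  · simpa [sub_eq_add_neg] using (hnext (-1)).symm

theorem O_apply_add_one_iff_not {n : ℕ} (c : AltCycle S.Γ S.O n) (j : ZMod n) :
    S.O (c.f (j + 1)) (c.f (j + 1 + 1)) ↔ ¬ S.O (c.f j) (c.f (j + 1)) := by
  have hadj := (c.adj (j + 1)).symm
  rw [add_assoc, one_add_one_eq_two] at hadj ⊢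
  rw [c.alt j, S.O_choice hadj, not_not]

theorem O_apply_intCast_iff {n : ℕ} (c : AltCycle S.Γ S.O n) (k : ℤ) :
    S.O (c.f k) (c.f (k + 1)) ↔ (Even k ↔ S.O (c.f 0) (c.f 1)) := by
  induction k using Int.induction_on with
  | zero => simp
  | succ k ih =>
    push_cast at ih ⊢
    rw [S.O_apply_add_one_iff_not, ih, Int.even_add_one]
    tauto
  | pred k ih =>
    have := S.O_apply_add_one_iff_not c ((-k - 1 : ℤ) : ZMod n)
    push_cast at this ih ⊢
    rw [sub_add_cancel, ih] at this
    rw [Int.even_sub_one, sub_add_cancel]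
    tauto

end Setup

namespace JumpData

variable {S : Setup V} (J : JumpData S)

theorem ell_pos : 0 < J.ell :=
  Nat.pos_of_ne_zero fun h => by have := J.hell; have := S.r_pos; simp_all

theorem odd_ell (hdvd : ¬ S.att ∣ S.r) : Odd J.ell := by
  refine Nat.not_even_iff_odd.1 fun ⟨t, ht⟩ => hdvd ⟨t, ?_⟩
  have := J.hell
  rw [ht] at this
  linarith

/-- `J.idx x` is the position `x ℓ` on the cycles of the `x`-th vertex of `C ∩ C'`; it is well
defined on `ZMod a` because `a ℓ = 2 r`. -/
def idx : ZMod S.att →+ ZMod (2 * S.r) :=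
  ZMod.lift S.att ⟨zmultiplesHom _ (J.ell : ZMod (2 * S.r)), by
    rw [zmultiplesHom_apply, natCast_zsmul, nsmul_eq_mul, ← Nat.cast_mul, J.hell,
      ZMod.natCast_self]⟩

theorem idx_intCast (k : ℤ) : J.idx k = ((k * J.ell : ℤ) : ZMod (2 * S.r)) := by
  simp [idx, ZMod.lift_coe]

theorem idx_natCast (k : ℕ) : J.idx k = ((k * J.ell : ℕ) : ZMod (2 * S.r)) := by
  simpa using J.idx_intCast k

theorem idx_one : J.idx 1 = J.ell := by
  simpa using J.idx_natCast 1

theorem idx_injective : Function.Injective J.idx := by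
  refine (injective_iff_map_eq_zero J.idx).2 fun x hx => ?_
  rw [← ZMod.natCast_zmod_val x, idx_natCast, ZMod.natCast_eq_zero_iff, ← J.hell] at hx
  rw [← ZMod.natCast_zmod_val x, ZMod.natCast_eq_zero_iff]
  exact Nat.dvd_of_mul_dvd_mul_right J.ell_pos hx

theorem idx_units_smul (σ : ℤˣ) (x : ZMod S.att) : J.idx (σ • x) = σ • J.idx x := by
  rw [Units.smul_def, Units.smul_def, map_zsmul]

/-- `J.Meets x y` says `v_{xℓ} = u_{yℓ}`. -/
def Meets (x y : ZMod S.att) : Prop := J.c'.f (J.idx x) = J.c.f (J.idx y)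

variable {J}

theorem Meets.right_unique {x y y' : ZMod S.att} (h : J.Meets x y) (h' : J.Meets x y') :
    y = y' :=
  J.idx_injective (J.c.inj (h.symm.trans h'))

theorem Meets.left_unique {x x' y : ZMod S.att} (h : J.Meets x y) (h' : J.Meets x' y) :
    x = x' :=
  J.idx_injective (J.c'.inj (h.trans h'.symm))

variable (J)

theorem meets_zero : J.Meets 0 0 := by
  simp [Meets, J.hc, J.hc']

theorem exists_meets_qt : ∃ δ : ZMod S.att, (δ = 1 ∨ δ = -1) ∧ J.Meets J.qt δ := by
  rcases J.hqt with h | h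
  · exact ⟨1, Or.inl rfl, by simpa [Meets, idx_natCast, idx_one] using h⟩
  · exact ⟨-1, Or.inr rfl, by simpa [Meets, idx_natCast, idx_one] using h⟩

theorem exists_meets_qh : ∃ δ : ZMod S.att, (δ = 1 ∨ δ = -1) ∧ J.Meets δ J.qh := by
  rcases J.hqh with h | h
  · exact ⟨1, Or.inl rfl, by simpa [Meets, idx_natCast, idx_one] using h.symm⟩
  · exact ⟨-1, Or.inr rfl, by simpa [Meets, idx_natCast, idx_one] using h.symm⟩

theorem qt_le_of_meets {m : ℕ} (h : J.Meets m 1 ∨ J.Meets m (-1)) : J.qt ≤ m :=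
  not_lt.1 fun hm => J.hqt_min m hm (by simpa [Meets, idx_natCast, idx_one] using h)

theorem qh_le_of_meets {n : ℕ} (h : J.Meets 1 n ∨ J.Meets (-1) n) : J.qh ≤ n :=
  not_lt.1 fun hn => J.hqh_min n hn (by simpa [Meets, idx_natCast, idx_one, eq_comm] using h)

theorem not_O_c'_zero_one : ¬ S.O (J.c'.f 0) (J.c'.f 1) := by
  simpa using (S.O_apply_iff_not_O_apply J.hne (i := 0) (i' := 0) (J.hc.trans J.hc'.symm)).1
    (by simpa [J.hc] using J.htail₁)

theorem O_c_idx_iff (k : ℤ) :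
    S.O (J.c.f (J.idx k)) (J.c.f (J.idx k + 1)) ↔ Even (k * J.ell) := by
  have h₀ : S.O (J.c.f 0) (J.c.f 1) := by simpa [J.hc] using J.htail₁
  rw [J.idx_intCast, S.O_apply_intCast_iff]
  simp [h₀]

theorem O_c'_idx_iff (k : ℤ) :
    S.O (J.c'.f (J.idx k)) (J.c'.f (J.idx k + 1)) ↔ ¬ Even (k * J.ell) := by
  rw [J.idx_intCast, S.O_apply_intCast_iff]
  simp [J.not_O_c'_zero_one]

theorem Meets.even_iff (hdvd : ¬ S.att ∣ S.r) {m n : ℤ} (h : J.Meets m n) : Even m ↔ Even n := by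
  have := S.O_apply_iff_not_O_apply J.hne h.symm
  rw [J.O_c_idx_iff, J.O_c'_idx_iff, not_not] at this
  have hℓ : ¬ Even (J.ell : ℤ) := by
    exact_mod_cast Nat.not_even_iff_odd.2 (J.odd_ell hdvd)
  simpa [Int.even_mul, hℓ] using this.symm

theorem odd_qt (hdvd : ¬ S.att ∣ S.r) : Odd J.qt := by
  obtain ⟨δ, hδ, h⟩ := J.exists_meets_qt
  have key : ∀ n : ℤ, Odd n → (n : ZMod S.att) = δ → Odd J.qt := fun n hn hnδ => by
    have := Meets.even_iff J hdvd (m := J.qt) (n := n) (by simpa [hnδ] using h)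
    rw [← Nat.not_even_iff_odd, ← Int.even_coe_nat, this, Int.not_even_iff_odd]
    exact hn
  rcases hδ with rfl | rfl
  exacts [key 1 odd_one (by simp), key (-1) (by simp) (by simp)]

/-- The element of `G` fixing `v` and swapping its two in-neighbours `v₁, v₋₁` on `C'` reverses
`C'`, hence fixes `C` setwise. -/
theorem exists_meets_neg_smul : ∃ σ : ℤˣ, ∀ {x y}, J.Meets x y → J.Meets (-x) (σ • y) := by
  have h₁ : S.O (J.c'.f 1) (J.c'.f 0) :=
    (S.O_choice (by simpa using (J.c'.adj 0).symm)).2 J.not_O_c'_zero_one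
  have h₁' : S.O (J.c'.f (-1)) (J.c'.f 0) := by
    simpa using (J.c'.O_pred_iff 0).2 (by simpa using h₁)
  obtain ⟨g, hg, hg₁, hg₀⟩ := S.O_orbit h₁ h₁'
  have hgc' := S.apply_add_eq_smul_of_apply_add_one_eq J.c' (S.mapCycle hg J.c') (-1)
    (k := 0) (k' := 0) hg₀ (by simpa [Setup.mapCycle] using hg₁)
  have hgv : (S.mapCycle hg J.c).f 0 = J.c.f 0 := by
    simpa [Setup.mapCycle, J.hc, ← J.hc'] using hg₀
  have hE : cycEdges (S.mapCycle hg J.c) = cycEdges J.c :=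
    (S.cycEdges_eq_or_eq_of_apply_eq J.hne rfl (J.hc'.trans J.hc.symm) hgv).resolve_right
      fun h => S.cycEdges_mapCycle_ne hg J.hne
        (h.trans (AltCycle.cycEdges_eq_of_apply_add_eq hgc').symm)
  obtain ⟨σ, hσ⟩ := S.exists_apply_add_eq_of_cycEdges_eq hE hgv
  refine ⟨σ, fun {x y} h => ?_⟩
  have e₁ := hgc' (J.idx x)
  have e₂ := hσ (J.idx y)
  simp only [Setup.mapCycle, zero_add, Units.neg_smul, one_smul] at e₁ e₂
  rw [Meets, map_neg, J.idx_units_smul, ← e₁, ← e₂, h]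

/-- The element of `G` carrying the arc `(v, u₁)` to `(v_{q_t ℓ}, v_{q_t ℓ + 1})` maps `C` onto
`C'`, hence `C'` onto `C`. -/
theorem exists_meets_add (hdvd : ¬ S.att ∣ S.r) {δ : ZMod S.att} (hδ : J.Meets J.qt δ) :
    ∃ ε : ℤˣ, ∀ {x y}, J.Meets x y → J.Meets (J.qt + y) (δ + ε • x) := by
  have harc : S.O (J.c'.f (J.idx J.qt)) (J.c'.f (J.idx J.qt + 1)) := by
    have hodd : Odd ((J.qt * J.ell : ℕ) : ℤ) := by
      exact_mod_cast (J.odd_qt hdvd).mul (J.odd_ell hdvd)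
    simpa using (J.O_c'_idx_iff J.qt).2 (by push_cast at hodd; exact Int.not_even_iff_odd.2 hodd)
  obtain ⟨τ, hτ, hτ₀, hτ₁⟩ := S.O_orbit J.htail₁ harc
  have hτc := S.apply_add_eq_smul_of_apply_add_one_eq J.c' (S.mapCycle hτ J.c) 1
    (k' := 0) (by simpa [Setup.mapCycle, J.hc] using hτ₀) (by simpa [Setup.mapCycle] using hτ₁)
  have hτv : (S.mapCycle hτ J.c').f 0 = J.c'.f (J.idx J.qt) := by
    simpa [Setup.mapCycle, J.hc'] using hτ₀
  have hE : cycEdges (S.mapCycle hτ J.c') = cycEdges J.c :=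
    (S.cycEdges_eq_or_eq_of_apply_eq J.hne hδ.symm rfl hτv).resolve_right
      fun h => S.cycEdges_mapCycle_ne hτ J.hne
        ((AltCycle.cycEdges_eq_of_apply_add_eq hτc).trans h.symm)
  obtain ⟨ε, hε⟩ := S.exists_apply_add_eq_of_cycEdges_eq hE (hτv.trans hδ)
  refine ⟨ε, fun {x y} h => ?_⟩
  have e₁ := hτc (J.idx y)
  have e₂ := hε (J.idx x)
  simp only [Setup.mapCycle, zero_add, one_smul] at e₁ e₂
  rw [Meets, map_add, map_add, J.idx_units_smul, ← e₁, ← e₂, h]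

theorem Meets.neg {x y : ZMod S.att} (h : J.Meets x y) : J.Meets (-x) (-y) := by
  obtain ⟨σ, hσ⟩ := J.exists_meets_neg_smul
  obtain ⟨δ, hδ, hqh⟩ := J.exists_meets_qh
  exact rel_neg_neg_of_rel_neg_smul (R := J.Meets) (fun h h' => Meets.left_unique h h')
    (by rcases hδ with rfl | rfl <;> simp) hqh hσ h

end JumpData

end HalfArc


open HalfArc

theorem statement_14_general {V : Type*} (S : Setup V) (J : JumpData S)
    (hdvd : ¬ S.att ∣ S.r) :
    (((J.jump * J.jump : ℕ) : ZMod S.att) = 1 ∨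
      ((J.jump * J.jump : ℕ) : ZMod S.att) = -1) ∧
    J.qt = J.qh := by
  obtain ⟨δ, hδ, hqt⟩ := J.exists_meets_qt
  obtain ⟨δ', hδ', hqh⟩ := J.exists_meets_qh
  obtain ⟨ε, hjump⟩ := J.exists_meets_add hdvd hqt
  have hq : J.qt = J.qh :=
    eq_of_rel_of_forall_le (R := J.Meets) (fun h h' => h.left_unique h') J.meets_zero
      (fun h => h.neg) hjump hδ hδ' hqh (fun _ => J.qt_le_of_meets) (fun _ => J.qh_le_of_meets)
  have hjump_eq : J.jump = J.qt := by rw [JumpData.jump, hq, min_self]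
  refine ⟨?_, hq⟩
  rw [hjump_eq]
  push_cast
  exact mul_self_eq_one_or_neg_one_of_rel (R := J.Meets) (fun h h' => h.right_unique h')
    J.meets_zero (fun h => h.neg) hjump hδ (J.odd_qt hdvd)

/-- Lemma 6.1 of the paper: if `a ∤ r` and `a ≠ |V(Γ)|` then
`q² ≡ ±1 (mod a)` and `q_t = q_h`. -/
theorem statement_14 {V : Type*} (S : Setup V) (J : JumpData S)
    (hdvd : ¬ S.att ∣ S.r) (hcard : S.att ≠ Nat.card V) :
    (((J.jump * J.jump : ℕ) : ZMod S.att) = 1 ∨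
      ((J.jump * J.jump : ℕ) : ZMod S.att) = -1) ∧
    J.qt = J.qh :=
  statement_14_general S J hdvd
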